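/- arXiv:math/9908108 — 3 statements merged into one kernel-verified Lean document; each statement's English description precedes it below -/
import Mathlib

section
/- Let U be a vector space over ℂ, z a nonzero complex number, k a nonnegative integer, and let f(x) = ∑_{n∈ℤ} f_n x^{-n-1} and g(x) = ∑_{n∈ℤ} g_n x^{-n-1} be formal Laurent series with coefficients in U. Suppose f(x) ∈ U((x)) (only finitely many negative powers of x appear, i.e., f is truncated below) and (x-z)^k f(x) = (x-z)^k g(x). Then for every n ∈ ℤ, the coefficient f_n lies in the linear span of {g_m | m ≥ n}. -/
/-!
Comparing coefficients of `x^{-n-1}` in `(x-z)^k f = (x-z)^k g` expresses `(-z)^k f_n` through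
`g_n, …, g_{n+k}` and `f_{n+1}, …, f_{n+k}`. Since `z ≠ 0` this solves for `f_n`, and a downward
induction on `n`, starting above the point from which `f` vanishes, puts every `f_n` in the span
of `{g_m | m ≥ n}`.
-/

open Finset Submodule

section LinearRecurrence

variable {K M : Type*} [DivisionRing K] [AddCommGroup M] [Module K M]

theorem mem_of_sum_smul_eq_sum_smul {P : Submodule K M} {k : ℕ} {a : ℕ → K} (ha : a k ≠ 0)
    {f g : ℤ → M} {n : ℤ}
    (hfg : ∑ i ∈ range (k + 1), a i • f (n + k - i) = ∑ i ∈ range (k + 1), a i • g (n + k - i))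
    (hg : ∀ i ≤ k, g (n + k - i) ∈ P) (hf : ∀ i < k, f (n + k - i) ∈ P) :
    f n ∈ P := by
  have hsum : a k • f n + ∑ i ∈ range k, a i • f (n + k - i) ∈ P := by
    have hlast : a k • f n = a k • f (n + k - k) := by rw [add_sub_cancel_right]
    rw [add_comm, hlast, ← sum_range_succ, hfg]
    exact sum_mem fun i hi => smul_mem _ _ (hg i (by simp at hi; lia))
  have hrest : ∑ i ∈ range k, a i • f (n + k - i) ∈ P :=
    sum_mem fun i hi => smul_mem _ _ (hf i (by simpa using hi))
  exact (P.smul_mem_iff ha).mp ((P.add_mem_iff_left hrest).mp hsum)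

theorem mem_span_image_ge_of_sum_smul_eq_sum_smul {k : ℕ} {a : ℕ → K} (ha : a k ≠ 0)
    {f g : ℤ → M} (hf : ∃ N : ℤ, ∀ n ≥ N, f n = 0)
    (hfg : ∀ n : ℤ,
      ∑ i ∈ range (k + 1), a i • f (n + k - i) = ∑ i ∈ range (k + 1), a i • g (n + k - i))
    (n : ℤ) : f n ∈ span K (g '' {m : ℤ | n ≤ m}) := by
  obtain ⟨N, hN⟩ := hf
  have span_antitone {n n' : ℤ} (h : n' ≤ n) :
      span K (g '' {m | n ≤ m}) ≤ span K (g '' {m | n' ≤ m}) :=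
    span_mono <| Set.image_mono fun m (hm : n ≤ m) => show n' ≤ m by lia
  have key : ∀ n ≤ N, ∀ m ≥ n, f m ∈ span K (g '' {m | n ≤ m}) := by
    refine Int.leInductionDown (fun m hm => by simp [hN m hm]) fun n _ ih m hm => ?_
    rcases hm.lt_or_eq with hm | rfl
    · exact span_antitone (by lia) (ih m (by lia))
    · refine mem_of_sum_smul_eq_sum_smul ha (hfg (n - 1)) (fun i hi => ?_) fun i hi => ?_
      · exact subset_span ⟨_, show n - 1 ≤ n - 1 + k - i by lia, rfl⟩
      · exact span_antitone (by lia) (ih _ (by lia))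
  rcases le_or_gt n N with h | h
  · exact key n h n le_rfl
  · simp [hN n h.le]

end LinearRecurrence

/-- If `f(x) = ∑ₙ fₙ x^{-n-1} ∈ U((x))` (truncated below, i.e. only finitely
many negative powers of `x`) and `(x-z)^k f(x) = (x-z)^k g(x)`, then each `fₙ` lies in the
span of `{g_m | m ≥ n}`.  The coefficient of `x^{-n-1}` in `(x-z)^k h(x)` is
`∑_{i=0}^{k} C(k,i) (-z)^i h_{n+k-i}`. -/
theorem stmt0 (U : Type*) [AddCommGroup U] [Module ℂ U] (z : ℂ) (hz : z ≠ 0) (k : ℕ)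
    (f g : ℤ → U)
    (hf : ∃ N : ℤ, ∀ n ≥ N, f n = 0)
    (hfg : ∀ n : ℤ,
      ∑ i ∈ Finset.range (k + 1), ((k.choose i : ℂ) * (-z) ^ i) • f (n + k - i)
        = ∑ i ∈ Finset.range (k + 1), ((k.choose i : ℂ) * (-z) ^ i) • g (n + k - i)) :
    ∀ n : ℤ, f n ∈ Submodule.span ℂ (g '' {m : ℤ | n ≤ m}) :=
  mem_span_image_ge_of_sum_smul_eq_sum_smul
    (by simpa using pow_ne_zero k (neg_ne_zero.mpr hz)) hf hfg
end

section
/- For a nonzero complex number z and formal variables x₀, x, the formal delta function identity x₀^{-1}δ((x-z)/x₀) - x₀^{-1}δ((z-x)/(-x₀)) = z^{-1}δ((x-x₀)/z) holds in ℂ[[x₀, x₀^{-1}, x, x^{-1}]], where δ(y) = ∑_{n∈ℤ} y^n and binomial expressions (x±z)^n are expanded in nonnegative powers of the second summand. -/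
/-!
Every term is a multiple of `z ^ (-a - 1 - b)`, and the three terms live where `-a - 1 - b`,
`b` and `a` respectively are nonnegative. These three integers sum to `-1`, so at most two of
them are nonnegative. When exactly two are, the two surviving terms agree by the symmetry
`C(n, i) = C(n, n - i)` and upper negation `C(r, i) = (-1)^i C(i - r - 1, i)`. When only one
is, its binomial coefficient is `C(N, i)` with `0 ≤ N < i`, hence zero.
-/

/-- The generalized binomial coefficient `C(r,i) = r(r-1)⋯(r-i+1)/i!` for `r : ℤ`. -/
noncomputable def gbinom (r : ℤ) (i : ℕ) : ℂ :=
  (∏ j ∈ Finset.range i, ((r : ℂ) - j)) / (Nat.factorial i : ℂ)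

theorem gbinom_natCast (n i : ℕ) : gbinom n i = n.choose i := by
  rw [gbinom, Int.cast_natCast, ← descPochhammer_eval_eq_prod_range,
    descPochhammer_eval_eq_descFactorial, Nat.descFactorial_eq_factorial_mul_choose,
    Nat.cast_mul, mul_div_cancel_left₀ _ (by exact_mod_cast i.factorial_ne_zero)]

theorem gbinom_eq_zero_of_lt {r : ℤ} {i : ℕ} (hr : 0 ≤ r) (h : r < i) : gbinom r i = 0 := by
  lift r to ℕ using hr
  rw [gbinom_natCast, Nat.choose_eq_zero_of_lt (by omega), Nat.cast_zero]

theorem gbinom_symm {r : ℤ} {i j : ℕ} (h : (i + j : ℤ) = r) : gbinom r i = gbinom r j := by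
  subst h
  rw [← Nat.cast_add, gbinom_natCast, gbinom_natCast, Nat.choose_symm_add]

theorem gbinom_upper_neg (r : ℤ) (i : ℕ) : gbinom r i = (-1) ^ i * gbinom (i - r - 1) i := by
  have hsign := Finset.pow_card_mul_prod (s := Finset.range i) (b := (-1 : ℂ))
    (f := fun j => (((i - r - 1 : ℤ) : ℂ) - j))
  rw [Finset.card_range] at hsign
  rw [gbinom, gbinom, mul_div_assoc', hsign, ← Finset.prod_range_reflect]
  congr 1
  refine Finset.prod_congr rfl fun j hj => ?_
  rw [Finset.mem_range] at hj
  rw [Nat.sub_sub, Nat.cast_sub (by omega : 1 + j ≤ i)]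
  push_cast
  ring

theorem xSubZ_coeff_eq_zSubX_coeff (z : ℂ) {a b : ℤ} (hp : 0 ≤ -a - 1 - b) (hb : 0 ≤ b) :
    gbinom (-a - 1) (-a - 1 - b).toNat * (-z) ^ (-a - 1 - b).toNat
      = (-1 : ℂ) ^ (a + 1) * gbinom (-a - 1) b.toNat * (-1 : ℂ) ^ b.toNat *
          z ^ (-a - 1 - b) := by
  obtain ⟨p, hpa⟩ := Int.eq_ofNat_of_zero_le hp
  lift b to ℕ using hb
  rw [hpa, Int.toNat_natCast, Int.toNat_natCast, zpow_natCast,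
    gbinom_symm (by omega : (p + b : ℤ) = -a - 1), show a + 1 = -((p + b : ℕ) : ℤ) by omega,
    zpow_neg, zpow_natCast, ← inv_pow, inv_neg, inv_one, neg_pow]
  ring_nf
  simp

theorem xSubZ_coeff_eq_xSubX₀_coeff (z : ℂ) {a b : ℤ} (hp : 0 ≤ -a - 1 - b) (ha : 0 ≤ a) :
    gbinom (-a - 1) (-a - 1 - b).toNat * (-z) ^ (-a - 1 - b).toNat
      = z ^ (-(a + b) - 1) * gbinom (a + b) a.toNat * (-1 : ℂ) ^ a.toNat := by
  obtain ⟨p, hpa⟩ := Int.eq_ofNat_of_zero_le hp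
  lift a to ℕ using ha
  rw [show -(a + b) - 1 = -(a : ℤ) - 1 - b by ring, hpa, Int.toNat_natCast, Int.toNat_natCast,
    zpow_natCast, gbinom_upper_neg (-a - 1), gbinom_upper_neg (a + b), neg_pow,
    show (p : ℤ) - (-a - 1) - 1 = a - (a + b) - 1 by omega,
    gbinom_symm (i := p) (j := a) (by omega)]
  ring_nf
  simp

theorem neg_zSubX_coeff_eq_xSubX₀_coeff (z : ℂ) {a b : ℤ} (ha : 0 ≤ a) (hb : 0 ≤ b) :
    -((-1 : ℂ) ^ (a + 1) * gbinom (-a - 1) b.toNat * (-1 : ℂ) ^ b.toNat * z ^ (-a - 1 - b))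
      = z ^ (-(a + b) - 1) * gbinom (a + b) a.toNat * (-1 : ℂ) ^ a.toNat := by
  lift a to ℕ using ha
  lift b to ℕ using hb
  rw [Int.toNat_natCast, Int.toNat_natCast, gbinom_upper_neg,
    gbinom_symm (i := a) (j := b) (r := a + b) rfl,
    show (b : ℤ) - (-a - 1) - 1 = a + b by ring, show -(a + b : ℤ) - 1 = -a - 1 - b by ring,
    ← Nat.cast_add_one, zpow_natCast]
  ring_nf
  simp

/-- The three `if`s are the coefficients of `x₀^a x^b` in `x₀⁻¹δ((x-z)/x₀)`,
`x₀⁻¹δ((z-x)/(-x₀))` and `z⁻¹δ((x-x₀)/z)`, contributed by the summands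
`n = -a-1, i = -a-1-b`; `n = -a-1, i = b`; and `n = a+b, i = a` of `∑ₙ ∑ᵢ C(n,i) ⋯`. -/
theorem stmt7_general (z : ℂ) :
    ∀ a b : ℤ,
      (if 0 ≤ -a - 1 - b then
          gbinom (-a - 1) (-a - 1 - b).toNat * (-z) ^ ((-a - 1 - b).toNat) else 0)
      - (if 0 ≤ b then
          (-1 : ℂ) ^ (a + 1) * gbinom (-a - 1) b.toNat * (-1 : ℂ) ^ (b.toNat) *
            z ^ (-a - 1 - b) else 0)
      = (if 0 ≤ a then
          z ^ (-(a + b) - 1) * gbinom (a + b) a.toNat * (-1 : ℂ) ^ (a.toNat) else 0) := by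
  intro a b
  by_cases hp : 0 ≤ -a - 1 - b <;> by_cases hb : 0 ≤ b <;> by_cases ha : 0 ≤ a <;>
    simp only [hp, hb, ha, if_true, if_false]
  · omega
  · rw [xSubZ_coeff_eq_zSubX_coeff z hp hb, sub_self]
  · rw [xSubZ_coeff_eq_xSubX₀_coeff z hp ha, sub_zero]
  · rw [gbinom_eq_zero_of_lt (by omega) (by omega), zero_mul, sub_zero]
  · rw [zero_sub, neg_zSubX_coeff_eq_xSubX₀_coeff z ha hb]
  · rw [gbinom_eq_zero_of_lt (by omega) (by omega), mul_zero, zero_mul, zero_mul, sub_zero]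
  · rw [gbinom_eq_zero_of_lt (by omega) (by omega), mul_zero, zero_mul, sub_zero]
  · rw [sub_zero]

/-- the formal delta-function identity
`x₀⁻¹δ((x-z)/x₀) - x₀⁻¹δ((z-x)/(-x₀)) = z⁻¹δ((x-x₀)/z)`
in `ℂ[[x₀,x₀⁻¹,x,x⁻¹]]`, stated coefficientwise: for each `a, b : ℤ` the coefficients of
`x₀^a x^b` on the two sides agree.  Here
`x₀⁻¹δ((x-z)/x₀) = ∑ₙ x₀^{-n-1}(x-z)ⁿ` with `(x-z)ⁿ = ∑ᵢ C(n,i) x^{n-i} (-z)^i`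
(so its `x₀^a x^b`-coefficient comes from `n = -a-1`, `i = -a-1-b ≥ 0`);
`x₀⁻¹δ((z-x)/(-x₀)) = ∑ₙ (-1)ⁿ x₀^{-n-1}(z-x)ⁿ` with `(z-x)ⁿ = ∑ᵢ C(n,i) z^{n-i}(-x)^i`
(coefficient from `n = -a-1`, `i = b ≥ 0`); and
`z⁻¹δ((x-x₀)/z) = ∑ₙ z^{-n-1}(x-x₀)ⁿ` with `(x-x₀)ⁿ = ∑ᵢ C(n,i) x^{n-i}(-x₀)^i`
(coefficient from `i = a ≥ 0`, `n = a + b`). -/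
theorem stmt7 (z : ℂ) (hz : z ≠ 0) :
    ∀ a b : ℤ,
      (if 0 ≤ -a - 1 - b then
          gbinom (-a - 1) (-a - 1 - b).toNat * (-z) ^ ((-a - 1 - b).toNat) else 0)
      - (if 0 ≤ b then
          (-1 : ℂ) ^ (a + 1) * gbinom (-a - 1) b.toNat * (-1 : ℂ) ^ (b.toNat) *
            z ^ (-a - 1 - b) else 0)
      = (if 0 ≤ a then
          z ^ (-(a + b) - 1) * gbinom (a + b) a.toNat * (-1 : ℂ) ^ (a.toNat) else 0) :=
  stmt7_general z
end

section
/- The formal delta-function expression x₂^{-1}δ((x₁-x₀)/x₂) is annihilated by ∂/∂x₁ + ∂/∂x₂ after the change of variables; more precisely, e^{z₀(∂/∂x₁ + ∂/∂x₂)} applied to x₂^{-1}δ((x₁-x₀)/x₂) equals x₂^{-1}δ((x₁-x₀)/x₂), equivalently (x₂+z₀)^{-1}δ((x₁+z₀-x₀)/(x₂+z₀)) = x₂^{-1}δ((x₁-x₀)/x₂). -/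
open Finset Polynomial

lemma descPoch_prod (r : ℂ) (n : ℕ) :
    (descPochhammer ℂ n).eval r = ∏ j ∈ range n, (r - j) := by
  induction n with
  | zero => simp
  | succ n ih => rw [descPochhammer_succ_eval, ih, prod_range_succ]

lemma gbinom_eq_choose (r : ℤ) (i : ℕ) : gbinom r i = Ring.choose (r : ℂ) i := by
  have h := Ring.descPochhammer_eq_factorial_smul_choose (R := ℂ) (r : ℂ) i
  have h2 : (descPochhammer ℤ i).smeval (r : ℂ) = (descPochhammer ℂ i).eval (r : ℂ) := by
    rw [← aeval_eq_smeval, aeval_def, eval₂_eq_eval_map, descPochhammer_map]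
  rw [h2, descPoch_prod, nsmul_eq_mul] at h
  rw [gbinom, h, mul_comm, mul_div_assoc, div_self (by exact_mod_cast i.factorial_ne_zero), mul_one]

lemma gbinom_vandermonde (x y : ℤ) (M : ℕ) :
    ∑ k ∈ range (M + 1), gbinom x k * gbinom y (M - k) = gbinom (x + y) M := by
  have h := Ring.add_choose_eq (R := ℂ) (r := (x : ℂ)) (s := (y : ℂ)) M (Commute.all _ _)
  rw [Finset.Nat.sum_antidiagonal_eq_sum_range_succ_mk] at h
  simp only [gbinom_eq_choose]
  rw [Int.cast_add, h]

lemma gbinom_reflect (r : ℤ) (i : ℕ) :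
    gbinom r i = (-1) ^ i * gbinom ((i : ℤ) - 1 - r) i := by
  unfold gbinom
  rw [← mul_div_assoc]
  congr 1
  have key : ∀ j ∈ range i, ((r : ℂ) - j)
      = (-1) * ((((i : ℤ) - 1 - r : ℤ) : ℂ) - ((i - 1 - j : ℕ) : ℂ)) := by
    intro j hj
    have hj' : j < i := mem_range.mp hj
    have hc : ((i - 1 - j : ℕ) : ℂ) = (i : ℂ) - 1 - j := by
      have h1 : (i - 1 - j : ℕ) = i - (j + 1) := by omega
      rw [h1, Nat.cast_sub (by omega)]
      push_cast; ring
    rw [hc]; push_cast; ring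
  rw [prod_congr rfl key, prod_mul_distrib, prod_const, card_range]
  congr 1
  exact (prod_range_reflect (fun j => ((((i : ℤ) - 1 - r : ℤ) : ℂ) - (j : ℂ))) i)

lemma gbinom_zero_right (r : ℤ) : gbinom r 0 = 1 := by simp [gbinom]

lemma gbinom_sub_one_self (M : ℕ) (h : 1 ≤ M) : gbinom ((M : ℤ) - 1) M = 0 := by
  unfold gbinom
  rw [Finset.prod_eq_zero (Finset.mem_range.mpr (Nat.sub_lt h Nat.one_pos) : M - 1 ∈ range M)]
  · simp
  · rw [Nat.cast_sub h]; push_cast; ring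

lemma gbinom_mul_choose (b : ℤ) (a m : ℕ) (h : a ≤ m) :
    gbinom (b + m) m * (m.choose a : ℂ) =
      gbinom (b + a) a * gbinom (b + m) (m - a) := by
  unfold gbinom
  have hsplit : (∏ j ∈ range m, (((b + m : ℤ) : ℂ) - j))
      = (∏ j ∈ range (m - a), (((b + m : ℤ) : ℂ) - j))
        * (∏ j ∈ range a, (((b + a : ℤ) : ℂ) - j)) := by
    rw [show range m = range ((m - a) + a) by rw [Nat.sub_add_cancel h], prod_range_add]
    congr 1
    refine prod_congr rfl fun j hj => ?_
    have hcast : ((m - a + j : ℕ) : ℂ) = (m : ℂ) - a + j := by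
      push_cast [Nat.cast_sub h]; ring
    rw [hcast]; push_cast; ring
  rw [Nat.cast_choose ℂ h, hsplit]
  have h1 : (a.factorial : ℂ) ≠ 0 := by exact_mod_cast a.factorial_ne_zero
  have h2 : ((m - a).factorial : ℂ) ≠ 0 := by exact_mod_cast (m - a).factorial_ne_zero
  have h3 : (m.factorial : ℂ) ≠ 0 := by exact_mod_cast m.factorial_ne_zero
  field_simp

lemma key_sum (b c : ℤ) (A M : ℕ) (hb : b = -c - 1 - A - M) :
    ∑ k ∈ range (M + 1),
      gbinom (c + k) k *
        (gbinom (b + (A + (M - k) : ℕ)) (A + (M - k)) * ((A + (M - k)).choose A : ℂ))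
      = if M = 0 then gbinom (-c - 1) A else 0 := by
  have hstep : ∀ k ∈ range (M + 1),
      gbinom (c + k) k *
        (gbinom (b + (A + (M - k) : ℕ)) (A + (M - k)) * ((A + (M - k)).choose A : ℂ))
        = gbinom (b + A) A * ((-1 : ℂ) ^ M * (gbinom (-c - 1) k * gbinom (c + M) (M - k))) := by
    intro k hk
    have hkM : k ≤ M := Nat.lt_succ_iff.mp (mem_range.mp hk)
    rw [gbinom_mul_choose b A (A + (M - k)) (Nat.le_add_right _ _)]
    have e1 : A + (M - k) - A = M - k := by omega
    rw [e1, gbinom_reflect (c + k) k, gbinom_reflect (b + (A + (M - k) : ℕ)) (M - k)]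
    have e2 : (k : ℤ) - 1 - (c + k) = -c - 1 := by ring
    have e3 : ((M - k : ℕ) : ℤ) - 1 - (b + (A + (M - k) : ℕ)) = c + M := by
      push_cast [Nat.cast_sub hkM, hb]; ring
    have e4 : ((-1 : ℂ) ^ k) * ((-1 : ℂ) ^ (M - k)) = (-1) ^ M := by
      rw [← pow_add]; congr 1; omega
    rw [e2, e3, ← e4]; ring
  rw [sum_congr rfl hstep, ← mul_sum, ← mul_sum, gbinom_vandermonde]
  have e5 : (-c - 1 + (c + M) : ℤ) = (M : ℤ) - 1 := by ring
  rw [e5]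
  rcases Nat.eq_zero_or_pos M with hM | hM
  · subst hM
    have : b + (A : ℤ) = -c - 1 := by omega
    simp [gbinom_zero_right, this]
  · rw [gbinom_sub_one_self M hM]
    simp [Nat.pos_iff_ne_zero.mp hM]

lemma gbinom_step (r : ℤ) (A : ℕ) :
    ((r : ℂ) - A) * gbinom r A = (r : ℂ) * gbinom (r - 1) A := by
  unfold gbinom
  rw [mul_div_assoc', mul_div_assoc']
  congr 1
  have h1 := prod_range_succ (fun j => ((r : ℂ) - j)) A
  have h2 := prod_range_succ' (fun j => ((r : ℂ) - j)) A
  calc ((r : ℂ) - A) * ∏ j ∈ range A, ((r : ℂ) - j)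
      = ∏ j ∈ range (A + 1), ((r : ℂ) - j) := by rw [h1]; ring
    _ = (r : ℂ) * ∏ j ∈ range A, (((r - 1 : ℤ) : ℂ) - j) := by
        rw [h2]
        have : ∀ j ∈ range A, ((r : ℂ) - ((j + 1 : ℕ) : ℂ)) = (((r - 1 : ℤ) : ℂ) - j) := by
          intro j hj; push_cast; ring
        rw [prod_congr rfl this]; push_cast; ring

/-- The coefficient of `x₀^a x₁^b x₂^c` in `x₂⁻¹ δ((x₁-x₀)/x₂) = ∑ₙ x₂^{-n-1}(x₁-x₀)ⁿ`,
where `(x₁-x₀)ⁿ = ∑ᵢ C(n,i) x₁^{n-i} (-x₀)^i` is expanded in nonnegative powers of `x₀`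
(so `n = -c-1`, `i = a ≥ 0`, `b = n - a`). -/
noncomputable def deltaD : ℤ → ℤ → ℤ → ℂ := fun a b c =>
  if 0 ≤ a ∧ b = -c - 1 - a then gbinom (-c - 1) a.toNat * (-1 : ℂ) ^ a.toNat else 0

/-- The operator `∂/∂x₁ + ∂/∂x₂` on formal series in `x₀, x₁, x₂`, in terms of
coefficient functions. -/
noncomputable def Dop (F : ℤ → ℤ → ℤ → ℂ) : ℤ → ℤ → ℤ → ℂ := fun a b c =>
  ((b + 1 : ℤ) : ℂ) * F a (b + 1) c + ((c + 1 : ℤ) : ℂ) * F a b (c + 1)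

lemma part1 : ∀ a b c : ℤ, Dop deltaD a b c = 0 := by
  intro a b c
  simp only [Dop, deltaD]
  by_cases h : 0 ≤ a ∧ b = -c - 2 - a
  · obtain ⟨ha, hbc⟩ := h
    rw [if_pos ⟨ha, by omega⟩, if_pos ⟨ha, by omega⟩]
    have e1 : ((b + 1 : ℤ) : ℂ) = ((-c - 1 : ℤ) : ℂ) - (a.toNat : ℂ) := by
      rw [show (b + 1 : ℤ) = (-c - 1) - (a.toNat : ℤ) from by omega]
      push_cast; ring
    have e2 : ((c + 1 : ℤ) : ℂ) = -((-c - 1 : ℤ) : ℂ) := by push_cast; ring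
    have e3 : (-(c + 1) - 1 : ℤ) = (-c - 1) - 1 := by ring
    rw [e1, e2, e3]
    linear_combination ((-1 : ℂ) ^ a.toNat) * gbinom_step (-c - 1) a.toNat
  · rw [if_neg (by omega), if_neg (by omega)]
    ring

lemma part2 (z₀ : ℂ) : ∀ a b c : ℤ,
    ∑' k : ℕ, (z₀ ^ k / (Nat.factorial k : ℂ)) * (Dop^[k] deltaD) a b c
      = deltaD a b c := by
  have hD0 : Dop (fun _ _ _ => (0 : ℂ)) = fun _ _ _ => (0 : ℂ) := by
    funext a b c; simp [Dop]
  have hDd : Dop deltaD = fun _ _ _ => (0 : ℂ) := by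
    funext a b c; exact part1 a b c
  have hiter0 : ∀ k : ℕ, Dop^[k] (fun _ _ _ => (0 : ℂ)) = fun _ _ _ => (0 : ℂ) := by
    intro k
    induction k with
    | zero => rfl
    | succ k ih => rw [Function.iterate_succ_apply, hD0, ih]
  have hiter : ∀ k : ℕ, k ≠ 0 → Dop^[k] deltaD = fun _ _ _ => (0 : ℂ) := by
    intro k hk
    obtain ⟨m, rfl⟩ := Nat.exists_eq_succ_of_ne_zero hk
    rw [Function.iterate_succ_apply, hDd, hiter0]
  intro a b c
  rw [tsum_eq_single 0 (by intro k hk; rw [hiter k hk]; simp)]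
  simp

lemma part3 (z₀ : ℂ) : ∀ a b c : ℤ,
    (∑' n : ℤ,
      (if 0 ≤ -n - 1 - c then
          gbinom (-n - 1) (-n - 1 - c).toNat * z₀ ^ ((-n - 1 - c).toNat) else 0) *
      (if 0 ≤ a ∧ a + b ≤ n then
          gbinom n (n - b).toNat * ((n - b).toNat.choose a.toNat : ℂ) *
            z₀ ^ ((n - b - a).toNat) * (-1 : ℂ) ^ a.toNat else 0))
      = deltaD a b c := by
  intro a b c
  by_cases hcase : 0 ≤ a ∧ a + b ≤ -c - 1
  · obtain ⟨ha, hab⟩ := hcase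
    set A : ℕ := a.toNat with hA
    set M : ℕ := (-c - 1 - (a + b)).toNat with hMdef
    have hAa : (A : ℤ) = a := by omega
    have hM : (M : ℤ) = -c - 1 - (a + b) := by omega
    -- support is contained in Icc (a+b) (-c-1)
    have hsupp : ∀ n : ℤ, n ∉ Finset.Icc (a + b) (-c - 1) →
        (if 0 ≤ -n - 1 - c then
            gbinom (-n - 1) (-n - 1 - c).toNat * z₀ ^ ((-n - 1 - c).toNat) else 0) *
        (if 0 ≤ a ∧ a + b ≤ n then
            gbinom n (n - b).toNat * ((n - b).toNat.choose a.toNat : ℂ) *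
              z₀ ^ ((n - b - a).toNat) * (-1 : ℂ) ^ a.toNat else 0) = 0 := by
      intro n hn
      rw [Finset.mem_Icc] at hn
      rcases le_or_gt n (-c - 1) with h1 | h1
      · rw [if_neg (show ¬(0 ≤ a ∧ a + b ≤ n) from by omega), mul_zero]
      · rw [if_neg (show ¬(0 ≤ -n - 1 - c) from by omega), zero_mul]
    rw [tsum_eq_sum hsupp]
    have hIcc : Finset.Icc (a + b) (-c - 1)
        = (Finset.range (M + 1)).map
            (⟨fun k : ℕ => -c - 1 - (k : ℤ), show Function.Injective (fun k : ℕ => -c - 1 - (k : ℤ)) from fun x y hxy => by simp only [] at hxy; omega⟩ : ℕ ↪ ℤ) := by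
      ext n
      simp only [Finset.mem_Icc, Finset.mem_map, Finset.mem_range,
        Function.Embedding.coeFn_mk]
      constructor
      · rintro ⟨h1, h2⟩
        exact ⟨(-c - 1 - n).toNat, by omega, by omega⟩
      · rintro ⟨k, hk, rfl⟩
        omega
    rw [hIcc, Finset.sum_map]
    simp only [Function.Embedding.coeFn_mk]
    have hterm : ∀ k ∈ range (M + 1),
        (if 0 ≤ -(-c - 1 - (k : ℤ)) - 1 - c then
            gbinom (-(-c - 1 - (k : ℤ)) - 1) (-(-c - 1 - (k : ℤ)) - 1 - c).toNat *
              z₀ ^ ((-(-c - 1 - (k : ℤ)) - 1 - c).toNat) else 0) *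
        (if 0 ≤ a ∧ a + b ≤ -c - 1 - (k : ℤ) then
            gbinom (-c - 1 - (k : ℤ)) ((-c - 1 - (k : ℤ) - b).toNat) *
              (((-c - 1 - (k : ℤ) - b).toNat.choose a.toNat : ℕ) : ℂ) *
              z₀ ^ ((-c - 1 - (k : ℤ) - b - a).toNat) * (-1 : ℂ) ^ a.toNat else 0)
        = (z₀ ^ M * (-1 : ℂ) ^ A) *
            (gbinom (c + k) k *
              (gbinom (b + ((A + (M - k) : ℕ) : ℤ)) (A + (M - k)) *
                ((A + (M - k)).choose A : ℂ))) := by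
      intro k hk
      have hkM : k ≤ M := Nat.lt_succ_iff.mp (mem_range.mp hk)
      rw [if_pos (by omega), if_pos ⟨ha, by omega⟩]
      have eT1 : (-(-c - 1 - (k : ℤ)) - 1 - c).toNat = k := by omega
      have eT2 : (-c - 1 - (k : ℤ) - b).toNat = A + (M - k) := by omega
      have eT3 : (-c - 1 - (k : ℤ) - b - a).toNat = M - k := by omega
      rw [eT1, eT2, eT3]
      have eArg1 : (-(-c - 1 - (k : ℤ)) - 1) = c + k := by ring
      have eArg2 : (-c - 1 - (k : ℤ)) = b + ((A + (M - k) : ℕ) : ℤ) := by omega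
      rw [eArg1, eArg2]
      have ez : z₀ ^ k * z₀ ^ (M - k) = z₀ ^ M := by
        rw [← pow_add]; congr 1; omega
      rw [← ez, hA]
      ring
    rw [Finset.sum_congr rfl hterm, ← Finset.mul_sum,
      key_sum b c A M (by omega)]
    simp only [deltaD]
    by_cases hM0 : M = 0
    · rw [if_pos hM0, if_pos ⟨ha, by omega⟩, hM0]
      rw [← hA]; ring
    · rw [if_neg hM0, if_neg (by omega), mul_zero]
  · -- degenerate: every term vanishes
    have hzero : ∀ n : ℤ,
        (if 0 ≤ -n - 1 - c then
            gbinom (-n - 1) (-n - 1 - c).toNat * z₀ ^ ((-n - 1 - c).toNat) else 0) *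
        (if 0 ≤ a ∧ a + b ≤ n then
            gbinom n (n - b).toNat * ((n - b).toNat.choose a.toNat : ℂ) *
              z₀ ^ ((n - b - a).toNat) * (-1 : ℂ) ^ a.toNat else 0) = 0 := by
      intro n
      rcases le_or_gt n (-c - 1) with h1 | h1
      · rw [if_neg (show ¬(0 ≤ a ∧ a + b ≤ n) from by omega), mul_zero]
      · rw [if_neg (show ¬(0 ≤ -n - 1 - c) from by omega), zero_mul]
    rw [tsum_congr hzero, tsum_zero, deltaD, if_neg (by omega)]

/-- `(∂/∂x₁ + ∂/∂x₂)(x₂⁻¹δ((x₁-x₀)/x₂)) = 0`; consequently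
`e^{z₀(∂/∂x₁+∂/∂x₂)}` fixes `x₂⁻¹δ((x₁-x₀)/x₂)`, and equivalently
`(x₂+z₀)⁻¹ δ((x₁+z₀-x₀)/(x₂+z₀)) = x₂⁻¹ δ((x₁-x₀)/x₂)`, where on the left
`(x₂+z₀)^{-n-1}` is expanded in nonnegative powers of `z₀` and `(x₁+z₀-x₀)ⁿ` in
nonnegative powers of `z₀` and `x₀`.  All three identities are stated coefficientwise at
`x₀^a x₁^b x₂^c`. -/
theorem stmt11 (z₀ : ℂ) :
    (∀ a b c : ℤ, Dop deltaD a b c = 0) ∧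
    (∀ a b c : ℤ,
      ∑' k : ℕ, (z₀ ^ k / (Nat.factorial k : ℂ)) * (Dop^[k] deltaD) a b c
        = deltaD a b c) ∧
    (∀ a b c : ℤ,
      (∑' n : ℤ,
        (if 0 ≤ -n - 1 - c then
            gbinom (-n - 1) (-n - 1 - c).toNat * z₀ ^ ((-n - 1 - c).toNat) else 0) *
        (if 0 ≤ a ∧ a + b ≤ n then
            gbinom n (n - b).toNat * ((n - b).toNat.choose a.toNat : ℂ) *
              z₀ ^ ((n - b - a).toNat) * (-1 : ℂ) ^ a.toNat else 0))
        = deltaD a b c) := by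
  exact ⟨part1, part2 z₀, part3 z₀⟩
end
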